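/- arXiv:2409.09535 — 5 statements merged into one kernel-verified Lean document; each statement's English description precedes it below -/
import Mathlib

section
/- Let p, s, t ∈ ℕ and let A_xx, B_xx be skew-symmetric p×p, A_xs, B_xs be p×s, A_xy, B_xy be p×t, and A_ss, B_ss be skew-symmetric s×s complex matrices. Form the skew-symmetric (p+s+t)×(p+s+t) matrices A = [[A_xx, A_xs, A_xy],[−A_xsᵀ, A_ss, 0],[−A_xyᵀ, 0, 0]] and B = [[B_xx, B_xs, B_xy],[−B_xsᵀ, B_ss, 0],[−B_xyᵀ, 0, 0]] (3×3 block form). Assume: (1) for every λ ∈ ℂ the matrix (A_xy + λB_xy)ᵀ has trivial kernel (i.e. A_xy + λB_xy has full row rank p), and also B_xyᵀ has trivial kernel; (2) there exists λ₀ ∈ ℂ such that A_ss + λ₀B_ss is invertible, or B_ss is invertible. Then there exists an invertible complex (p+s+t)×(p+s+t) matrix T such that Tᵀ·A·T = [[0, 0, A_xy],[0, A_ss, 0],[−A_xyᵀ, 0, 0]] and Tᵀ·B·T = [[0, 0, B_xy],[0, B_ss, 0],[−B_xyᵀ, 0, 0]]. (Equivalently, the Jordan–Kronecker decomposition of the pencil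 A + λB is the union of those of the pencils P_K = ([[0, A_xy],[−A_xyᵀ, 0]], [[0, B_xy],[−B_xyᵀ, 0]]) and P_J = (A_ss, B_ss).) -/
open Matrix

noncomputable section

/-- The skew-symmetric block matrix `[[Xxx, Xxs, Xxy], [-Xxsᵀ, Xss, 0], [-Xxyᵀ, 0, 0]]`. -/
def triMat {p s t : ℕ} (Xxx : Matrix (Fin p) (Fin p) ℂ) (Xxs : Matrix (Fin p) (Fin s) ℂ)
    (Xxy : Matrix (Fin p) (Fin t) ℂ) (Xss : Matrix (Fin s) (Fin s) ℂ) :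
    Matrix (Fin p ⊕ (Fin s ⊕ Fin t)) (Fin p ⊕ (Fin s ⊕ Fin t)) ℂ :=
  Matrix.fromBlocks Xxx (Matrix.fromCols Xxs Xxy)
    (Matrix.fromRows (-Xxsᵀ) (-Xxyᵀ)) (Matrix.fromBlocks Xss 0 0 0)

/-!
Congruence by the unipotent matrix `T = [[1, 0, 0], [Xᵀ, 1, 0], [Y, Z, 1]]` keeps the blocks
`Mxy` and `Mss`, replaces `Mxs` by `Mxs + X Mss + Mxy Z` and adds `Mxy Y - (Mxy Y)ᵀ` to a skew
corner. So it suffices to solve the linear system `X Ass + Axy Z = -Axs`, `X Bss + Bxy Z = -Bxs`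
and then `Mxy Y - (Mxy Y)ᵀ = -corner` for `M = A, B` simultaneously.

Each system is solvable because, by trace duality, its adjoint system has only the trivial
solution. An adjoint solution yields a matrix `W` whose row space `U` satisfies
`U Axy ⊆ U Bxy`. As `Bxy` has independent rows, `Bxy⁻¹ ∘ Axy` is then an endomorphism of `U`;
an eigenvector `u` of it satisfies `u (Axy - c Bxy) = 0`, contradicting (1) unless `U = 0`.
Condition (2) is what expresses one unknown of the first adjoint system through the other.
-/

theorem Submodule.exists_mem_ne_zero_apply_eq_smul_apply {K V W : Type*} [Field K] [IsAlgClosed K]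
    [AddCommGroup V] [Module K V] [FiniteDimensional K V] [AddCommGroup W] [Module K W]
    {f g : V →ₗ[K] W} (hg : Function.Injective g) {U : Submodule K V} (hU : U ≠ ⊥)
    (hfg : U.map f ≤ U.map g) : ∃ u ∈ U, u ≠ 0 ∧ ∃ c : K, f u = c • g u := by
  have : Nontrivial U := Submodule.nontrivial_iff_ne_bot.mpr hU
  let gU := Submodule.equivMapOfInjective g hg U
  let fU := (f.domRestrict U).codRestrict (U.map g) fun u => hfg ⟨u, u.2, rfl⟩
  obtain ⟨c, hc⟩ := Module.End.exists_eigenvalue (gU.symm.toLinearMap ∘ₗ fU)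
  obtain ⟨v, hv⟩ := hc.exists_hasEigenvector
  refine ⟨v, v.2, by simpa using hv.2, c, ?_⟩
  have hgv : gU (c • v) = fU v := by
    rw [← hv.apply_eq_smul, LinearMap.comp_apply, LinearEquiv.coe_coe, gU.apply_symm_apply]
  simpa [gU, fU] using (congrArg Subtype.val hgv).symm

theorem Matrix.mulVec_surjective_of_vecMul_injective {K m n : Type*} [Field K] [Fintype m]
    [Fintype n] {A : Matrix m n K} (hA : Function.Injective A.vecMul) :
    Function.Surjective A.mulVec := by
  have hrank : A.rank = Fintype.card m := (vecMul_injective_iff.mp hA).rank_matrix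
  have htop : LinearMap.range A.mulVecLin = ⊤ :=
    Submodule.eq_top_of_finrank_eq (by rw [← rank, hrank, Module.finrank_fintype_fun_eq_card])
  exact fun w => LinearMap.range_eq_top.mp htop w

theorem Matrix.exists_trace_mul_eq {K m n : Type*} [CommSemiring K] [Fintype m] [Fintype n]
    [DecidableEq m] [DecidableEq n] (g : Module.Dual K (Matrix m n K)) :
    ∃ X : Matrix n m K, ∀ M, g M = trace (X * M) := by
  refine ⟨of fun j i => g (single i j 1), fun M => ?_⟩
  conv_lhs => rw [matrix_eq_sum_single M]
  simp only [map_sum, trace, diag, mul_apply, of_apply]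
  rw [Finset.sum_comm]
  refine Finset.sum_congr rfl fun i _ => Finset.sum_congr rfl fun j _ => ?_
  rw [show single j i (M j i) = M j i • single j i (1 : K) by
      rw [smul_single, smul_eq_mul, mul_one],
    map_smul, smul_eq_mul, mul_comm]

theorem Matrix.mem_range_of_forall_trace_mul {K V m n m' n' : Type*} [Field K] [AddCommGroup V]
    [Module K V] [Fintype m] [Fintype n] [Fintype m'] [Fintype n'] [DecidableEq m]
    [DecidableEq n] [DecidableEq m'] [DecidableEq n']
    (Φ : V →ₗ[K] Matrix m n K × Matrix m' n' K) {M₁ : Matrix m n K} {M₂ : Matrix m' n' K}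
    (h : ∀ (X₁ : Matrix n m K) (X₂ : Matrix n' m' K),
      (∀ v, trace (X₁ * (Φ v).1) + trace (X₂ * (Φ v).2) = 0) →
      trace (X₁ * M₁) + trace (X₂ * M₂) = 0) :
    (M₁, M₂) ∈ LinearMap.range Φ := by
  rw [← Subspace.forall_mem_dualAnnihilator_apply_eq_zero_iff]
  intro φ hφ
  obtain ⟨X₁, hX₁⟩ := exists_trace_mul_eq (φ ∘ₗ LinearMap.inl K _ _)
  obtain ⟨X₂, hX₂⟩ := exists_trace_mul_eq (φ ∘ₗ LinearMap.inr K _ _)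
  have hφX (N : Matrix m n K × Matrix m' n' K) :
      φ N = trace (X₁ * N.1) + trace (X₂ * N.2) := by
    rw [← hX₁, ← hX₂, LinearMap.comp_apply, LinearMap.comp_apply, ← map_add,
      LinearMap.inl_apply, LinearMap.inr_apply, Prod.mk_add_mk, add_zero, zero_add]
  rw [Submodule.mem_dualAnnihilator] at hφ
  rw [hφX]
  exact h X₁ X₂ fun v => by rw [← hφX]; exact hφ _ ⟨v, rfl⟩

theorem Matrix.trace_mul_sub_transpose {K n : Type*} [CommRing K] [Fintype n]
    (X M : Matrix n n K) :
    trace (X * (M - Mᵀ)) = trace ((X - Xᵀ) * M) := by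
  rw [Matrix.mul_sub, Matrix.sub_mul, trace_sub, trace_sub, ← trace_transpose (X * Mᵀ),
    transpose_mul, transpose_transpose, trace_mul_comm M]

theorem Matrix.trace_mul_eq_zero_of_symm_of_skew {K n : Type*} [Field K] [NeZero (2 : K)]
    [Fintype n] {X C : Matrix n n K} (hX : Xᵀ = X) (hC : Cᵀ = -C) : trace (X * C) = 0 := by
  have h : trace (X * C) = -trace (X * C) := by
    conv_lhs => rw [← trace_transpose, transpose_mul, hX, hC, Matrix.neg_mul, trace_neg,
      trace_mul_comm]
  rw [eq_neg_iff_add_eq_zero, ← two_mul] at h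
  exact (mul_eq_zero.mp h).resolve_left two_ne_zero

theorem Matrix.transpose_sub_transpose {K n : Type*} [AddCommGroup K] (N : Matrix n n K) :
    (N - Nᵀ)ᵀ = -(N - Nᵀ) := by
  rw [transpose_sub, transpose_transpose, neg_sub]

section Pencil

variable {K : Type*} [Field K] {l m n : Type*} [Fintype m]

/-- Every nonzero member `a • F + b • G` of the pencil has linearly independent rows: the pencil
has no eigenvalue, finite or infinite. -/
def Matrix.PencilFullRowRank (F G : Matrix m n K) : Prop :=
  ∀ a b : K, a ≠ 0 ∨ b ≠ 0 → ∀ v : m → K, v ᵥ* (a • F + b • G) = 0 → v = 0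

theorem Matrix.PencilFullRowRank.of_transpose_mulVec {F G : Matrix m n K}
    (hF : ∀ c : K, ∀ u : m → K, (F + c • G)ᵀ *ᵥ u = 0 → u = 0)
    (hG : ∀ u : m → K, Gᵀ *ᵥ u = 0 → u = 0) : PencilFullRowRank F G := by
  intro a b hab v hv
  rcases eq_or_ne a 0 with rfl | ha
  · refine hG v ?_
    rw [zero_smul, zero_add, vecMul_smul] at hv
    rw [mulVec_transpose]
    exact (smul_eq_zero.mp hv).resolve_left (by simpa using hab)
  · refine hF (b / a) v ?_
    rw [show a • F + b • G = a • (F + (b / a) • G) by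
        rw [smul_add, smul_smul, mul_div_cancel₀ _ ha],
      vecMul_smul] at hv
    rw [mulVec_transpose]
    exact (smul_eq_zero.mp hv).resolve_left ha

namespace Matrix.PencilFullRowRank

variable {F G : Matrix m n K}

theorem symm (h : PencilFullRowRank F G) : PencilFullRowRank G F :=
  fun a b hab => add_comm (a • G) (b • F) ▸ h b a hab.symm

theorem vecMul_injective_right (h : PencilFullRowRank F G) : Function.Injective G.vecMul := by
  rw [← G.coe_vecMulLinear, ← LinearMap.ker_eq_bot, LinearMap.ker_eq_bot']
  exact fun v hv => h 0 1 (Or.inr one_ne_zero) v (by simpa using hv)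

theorem mulVec_surjective_right [Fintype n] (h : PencilFullRowRank F G) :
    Function.Surjective G.mulVec :=
  mulVec_surjective_of_vecMul_injective h.vecMul_injective_right

theorem swap_add_smul (h : PencilFullRowRank F G) (c : K) : PencilFullRowRank G (F + c • G) := by
  intro a b hab v hv
  refine h b (a + b * c) ?_ v ?_
  · rcases eq_or_ne b 0 with rfl | hb
    · simpa using hab
    · exact Or.inl hb
  · rw [← hv]; congr 1; module

theorem eq_bot_of_map_le_map [IsAlgClosed K] (h : PencilFullRowRank F G)
    {U : Submodule K (m → K)} (hU : U.map F.vecMulLinear ≤ U.map G.vecMulLinear) : U = ⊥ := by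
  by_contra hne
  obtain ⟨u, -, hu, c, hc⟩ :=
    Submodule.exists_mem_ne_zero_apply_eq_smul_apply h.vecMul_injective_right hne hU
  refine hu (h 1 (-c) (Or.inl one_ne_zero) u ?_)
  simp only [vecMulLinear_apply] at hc
  rw [one_smul, neg_smul, vecMul_add, vecMul_neg, vecMul_smul, hc, add_neg_cancel]

theorem eq_zero_of_forall_exists_vecMul_eq [IsAlgClosed K] [Fintype l] (h : PencilFullRowRank F G)
    {W : Matrix l m K} (hW : ∀ v, ∃ w, v ᵥ* W ᵥ* F = w ᵥ* W ᵥ* G) : W = 0 := by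
  have hU : (LinearMap.range W.vecMulLinear).map F.vecMulLinear ≤
      (LinearMap.range W.vecMulLinear).map G.vecMulLinear := by
    rintro _ ⟨_, ⟨v, rfl⟩, rfl⟩
    obtain ⟨w, hw⟩ := hW v
    exact ⟨w ᵥ* W, ⟨w, rfl⟩, hw.symm⟩
  have hW0 := LinearMap.range_eq_bot.mp (h.eq_bot_of_map_le_map hU)
  exact vecMul_injective (funext fun v => by simpa using LinearMap.congr_fun hW0 v)

theorem eq_zero_of_mul_eq_mul_mul [IsAlgClosed K] [Fintype l] (h : PencilFullRowRank F G)
    {W : Matrix l m K} {N : Matrix l l K} (hW : W * F = N * W * G) : W = 0 :=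
  h.eq_zero_of_forall_exists_vecMul_eq fun v => ⟨v ᵥ* N, by simp only [vecMul_vecMul, hW]⟩

theorem eq_zero_of_mul_add_mul [IsAlgClosed K] [Fintype l] [DecidableEq l]
    (h : PencilFullRowRank F G) {S R : Matrix l l K} (hR : IsUnit R.det) {G₁ G₂ : Matrix l m K}
    (hS : S * G₁ + R * G₂ = 0) (hG : G₁ * F + G₂ * G = 0) : G₁ = 0 ∧ G₂ = 0 := by
  have hG₂ : G₂ = -(R⁻¹ * S * G₁) := by
    rw [Matrix.mul_assoc, ← Matrix.mul_neg, ← eq_neg_of_add_eq_zero_right hS,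
      ← Matrix.mul_assoc, nonsing_inv_mul R hR, Matrix.one_mul]
  have hG₁ : G₁ = 0 := h.eq_zero_of_mul_eq_mul_mul (N := R⁻¹ * S) <| by
    rw [eq_neg_of_add_eq_zero_left hG, hG₂, Matrix.neg_mul, neg_neg]
  exact ⟨hG₁, by rw [hG₂, hG₁, Matrix.mul_zero, neg_zero]⟩

/-- When `A + c • B` is the invertible member, `eq_zero_of_mul_add_mul` applies to the pencils
`(B, A + c • B)` and `(G, F + c • G)` with the unknowns `(G₂ - c • G₁, G₁)`. -/
theorem eq_zero_of_mul_add_mul_of_regular [IsAlgClosed K] [Fintype l] [DecidableEq l]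
    (h : PencilFullRowRank F G) {A B : Matrix l l K}
    (hAB : (∃ c : K, IsUnit (A + c • B).det) ∨ IsUnit B.det) {G₁ G₂ : Matrix l m K}
    (hA : A * G₁ + B * G₂ = 0) (hG : G₁ * F + G₂ * G = 0) : G₁ = 0 ∧ G₂ = 0 := by
  rcases hAB with ⟨c, hc⟩ | hB
  · obtain ⟨hG₂, hG₁⟩ := (h.swap_add_smul c).eq_zero_of_mul_add_mul hc
      (G₁ := G₂ - c • G₁) (G₂ := G₁)
      (by rw [← hA]; simp only [Matrix.mul_sub, Matrix.add_mul, Matrix.mul_smul, Matrix.smul_mul]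
          abel)
      (by rw [← hG]; simp only [Matrix.sub_mul, Matrix.mul_add, Matrix.mul_smul, Matrix.smul_mul]
          abel)
    exact ⟨hG₁, by rwa [hG₁, smul_zero, sub_zero] at hG₂⟩
  · exact h.eq_zero_of_mul_add_mul hB hA hG

/-- For skew `W₁, W₂` the row space of `W₁` is also its column space, and the column spaces of
`W₁` and `W₂` agree because `W₁ F = -W₂ G` with `G` surjective. -/
theorem left_eq_zero_of_mul_add_mul_of_skew [IsAlgClosed K] [Fintype n]
    (h : PencilFullRowRank F G) {W₁ W₂ : Matrix m m K} (hW₁ : W₁ᵀ = -W₁)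
    (hW₂ : W₂ᵀ = -W₂) (hW : W₁ * F + W₂ * G = 0) : W₁ = 0 := by
  refine h.eq_zero_of_forall_exists_vecMul_eq fun v => ?_
  obtain ⟨x, rfl⟩ := h.mulVec_surjective_right v
  have hW₂G : W₂ * G = -(W₁ * F) := eq_neg_of_add_eq_zero_right hW
  have key : (F *ᵥ x) ᵥ* W₁ = -((G *ᵥ x) ᵥ* W₂) := by
    rw [← mulVec_transpose, ← mulVec_transpose, hW₁, hW₂, neg_mulVec, neg_mulVec, neg_neg,
      mulVec_mulVec, mulVec_mulVec, hW₂G, neg_mulVec]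
  refine ⟨F *ᵥ x, ?_⟩
  rw [key, neg_vecMul, vecMul_vecMul, vecMul_vecMul, hW₂G, vecMul_neg, neg_neg]

theorem eq_zero_of_mul_add_mul_of_skew [IsAlgClosed K] [Fintype n]
    (h : PencilFullRowRank F G) {W₁ W₂ : Matrix m m K} (hW₁ : W₁ᵀ = -W₁)
    (hW₂ : W₂ᵀ = -W₂) (hW : W₁ * F + W₂ * G = 0) : W₁ = 0 ∧ W₂ = 0 :=
  ⟨h.left_eq_zero_of_mul_add_mul_of_skew hW₁ hW₂ hW,
    h.symm.left_eq_zero_of_mul_add_mul_of_skew hW₂ hW₁ (by rwa [add_comm])⟩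

theorem exists_mul_add_mul_eq [IsAlgClosed K] [Fintype l] [DecidableEq l] [DecidableEq m]
    [Fintype n] [DecidableEq n] (h : PencilFullRowRank F G) {A B : Matrix l l K}
    (hAB : (∃ c : K, IsUnit (A + c • B).det) ∨ IsUnit B.det) (C D : Matrix m l K) :
    ∃ (X : Matrix m l K) (Z : Matrix n l K), X * A + F * Z = C ∧ X * B + G * Z = D := by
  let Φ : Matrix m l K × Matrix n l K →ₗ[K] Matrix m l K × Matrix m l K :=
    ((mulRightLinearMap m K A).coprod (mulLeftLinearMap l K F)).prod
      ((mulRightLinearMap m K B).coprod (mulLeftLinearMap l K G))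
  have hΦ (X : Matrix m l K) (Z : Matrix n l K) : Φ (X, Z) = (X * A + F * Z, X * B + G * Z) := rfl
  obtain ⟨⟨X, Z⟩, hXZ⟩ : (C, D) ∈ LinearMap.range Φ := by
    refine mem_range_of_forall_trace_mul Φ fun X₁ X₂ hX => ?_
    have hA : A * X₁ + B * X₂ = 0 := ext_iff_trace_mul_right.mpr fun X => by
      have := hX (X, 0)
      simp only [hΦ, Matrix.mul_zero, add_zero, ← Matrix.mul_assoc] at this
      rw [trace_mul_cycle, trace_mul_cycle X₂] at this
      rw [Matrix.add_mul, trace_add, this, Matrix.zero_mul, trace_zero]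
    have hF : X₁ * F + X₂ * G = 0 := ext_iff_trace_mul_right.mpr fun Z => by
      have := hX (0, Z)
      simp only [hΦ, Matrix.zero_mul, zero_add, ← Matrix.mul_assoc] at this
      rw [Matrix.add_mul, trace_add, this, Matrix.zero_mul, trace_zero]
    obtain ⟨rfl, rfl⟩ := h.eq_zero_of_mul_add_mul_of_regular hAB hA hF
    simp
  exact ⟨X, Z, congrArg Prod.fst hXZ, congrArg Prod.snd hXZ⟩

theorem exists_mul_sub_transpose_eq [IsAlgClosed K] [NeZero (2 : K)] [DecidableEq m] [Fintype n]
    [DecidableEq n] (h : PencilFullRowRank F G) {C D : Matrix m m K} (hC : Cᵀ = -C)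
    (hD : Dᵀ = -D) : ∃ Y : Matrix n m K, F * Y - (F * Y)ᵀ = C ∧ G * Y - (G * Y)ᵀ = D := by
  let skew : Matrix m m K →ₗ[K] Matrix m m K :=
    LinearMap.id - (transposeLinearEquiv m m K K).toLinearMap
  let Ψ : Matrix n m K →ₗ[K] Matrix m m K × Matrix m m K :=
    (skew ∘ₗ mulLeftLinearMap m K F).prod (skew ∘ₗ mulLeftLinearMap m K G)
  have hΨ (Y : Matrix n m K) : Ψ Y = (F * Y - (F * Y)ᵀ, G * Y - (G * Y)ᵀ) := rfl
  obtain ⟨Y, hY⟩ : (C, D) ∈ LinearMap.range Ψ := by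
    refine mem_range_of_forall_trace_mul Ψ fun X₁ X₂ hX => ?_
    have hFG : (X₁ - X₁ᵀ) * F + (X₂ - X₂ᵀ) * G = 0 :=
      ext_iff_trace_mul_right.mpr fun Y => by
        have := hX Y
        rw [hΨ, trace_mul_sub_transpose, trace_mul_sub_transpose] at this
        rw [Matrix.add_mul, trace_add, Matrix.mul_assoc, Matrix.mul_assoc, this, Matrix.zero_mul,
          trace_zero]
    obtain ⟨hX₁, hX₂⟩ := h.eq_zero_of_mul_add_mul_of_skew (transpose_sub_transpose X₁)
      (transpose_sub_transpose X₂) hFG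
    rw [trace_mul_eq_zero_of_symm_of_skew (sub_eq_zero.mp hX₁).symm hC,
      trace_mul_eq_zero_of_symm_of_skew (sub_eq_zero.mp hX₂).symm hD, add_zero]
  exact ⟨Y, congrArg Prod.fst hY, congrArg Prod.snd hY⟩

end Matrix.PencilFullRowRank

end Pencil

theorem Matrix.fromRows_add_fromRows {R m₁ m₂ n : Type*} [Add R] (A B : Matrix m₁ n R)
    (C D : Matrix m₂ n R) : fromRows A C + fromRows B D = fromRows (A + B) (C + D) := by
  ext (i | i) j <;> rfl

theorem Matrix.fromCols_add_fromCols {R m n₁ n₂ : Type*} [Add R] (A B : Matrix m n₁ R)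
    (C D : Matrix m n₂ R) : fromCols A C + fromCols B D = fromCols (A + B) (C + D) := by
  ext i (j | j) <;> rfl

section Shear

variable {K : Type*} [CommRing K] {p s : Type*}

/-- The `xx` block of `[[1, X], [0, 1]] * [[Mxx, Mxs], [-Mxsᵀ, Mss]] * [[1, 0], [Xᵀ, 1]]`. -/
def shearCorner [Fintype p] [Fintype s] (Mxx : Matrix p p K) (Mxs : Matrix p s K)
    (Mss : Matrix s s K) (X : Matrix p s K) : Matrix p p K :=
  Mxx + (Mxs * Xᵀ - (Mxs * Xᵀ)ᵀ) + X * Mss * Xᵀ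

theorem transpose_shearCorner [Fintype p] [Fintype s] {Mxx : Matrix p p K} (Mxs : Matrix p s K)
    {Mss : Matrix s s K} (hMxx : Mxxᵀ = -Mxx) (hMss : Mssᵀ = -Mss) (X : Matrix p s K) :
    (shearCorner Mxx Mxs Mss X)ᵀ = -shearCorner Mxx Mxs Mss X := by
  rw [shearCorner, transpose_add, transpose_add, hMxx, transpose_sub_transpose]
  simp only [transpose_mul, transpose_transpose, hMss, Matrix.mul_neg, Matrix.neg_mul,
    Matrix.mul_assoc, neg_add]

end Shear

section BlockShear

variable {p s t : ℕ}

def blockShear (X : Matrix (Fin p) (Fin s) ℂ) (Y : Matrix (Fin t) (Fin p) ℂ)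
    (Z : Matrix (Fin t) (Fin s) ℂ) :
    Matrix (Fin p ⊕ (Fin s ⊕ Fin t)) (Fin p ⊕ (Fin s ⊕ Fin t)) ℂ :=
  fromBlocks 1 0 (fromRows Xᵀ Y) (fromBlocks 1 0 Z 1)

theorem det_blockShear (X : Matrix (Fin p) (Fin s) ℂ) (Y : Matrix (Fin t) (Fin p) ℂ)
    (Z : Matrix (Fin t) (Fin s) ℂ) : (blockShear X Y Z).det = 1 := by
  simp [blockShear, det_fromBlocks_zero₁₂]

theorem transpose_blockShear_mul_triMat_mul (X : Matrix (Fin p) (Fin s) ℂ)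
    (Y : Matrix (Fin t) (Fin p) ℂ) (Z : Matrix (Fin t) (Fin s) ℂ)
    (Mxx : Matrix (Fin p) (Fin p) ℂ) (Mxs : Matrix (Fin p) (Fin s) ℂ)
    (Mxy : Matrix (Fin p) (Fin t) ℂ)
    {Mss : Matrix (Fin s) (Fin s) ℂ} (hMss : Mssᵀ = -Mss) :
    (blockShear X Y Z)ᵀ * triMat Mxx Mxs Mxy Mss * blockShear X Y Z =
      triMat (shearCorner Mxx Mxs Mss X + (Mxy * Y - (Mxy * Y)ᵀ))
        (Mxs + X * Mss + Mxy * Z) Mxy Mss := by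
  simp only [blockShear, triMat, shearCorner, fromBlocks_transpose, transpose_fromRows,
    transpose_one, transpose_zero, fromBlocks_multiply, fromBlocks_mul_fromRows,
    fromCols_mul_fromBlocks, fromCols_mul_fromRows, Matrix.mul_one, Matrix.one_mul,
    Matrix.mul_zero, Matrix.zero_mul, add_zero, zero_add, fromRows_add_fromRows,
    fromCols_add_fromCols, fromBlocks_inj, fromRows_ext_iff, transpose_add, transpose_mul,
    transpose_transpose, hMss, Matrix.mul_neg, Matrix.neg_mul, Matrix.add_mul, neg_zero]
  exact ⟨by abel, trivial, ⟨by abel, trivial⟩, trivial⟩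

end BlockShear

/-- A skew-symmetric pencil of the block form of Lemma on JK invariants for
block upper-triangular pencils is congruent to the direct sum of its Kronecker
part `P_K` and its Jordan part `P_J`. -/
theorem JK_decomposition_block_upper_triangular
    (p s t : ℕ)
    (Axx Bxx : Matrix (Fin p) (Fin p) ℂ)
    (Axs Bxs : Matrix (Fin p) (Fin s) ℂ)
    (Axy Bxy : Matrix (Fin p) (Fin t) ℂ)
    (Ass Bss : Matrix (Fin s) (Fin s) ℂ)
    (hAxx : Axxᵀ = -Axx) (hBxx : Bxxᵀ = -Bxx)
    (hAss : Assᵀ = -Ass) (hBss : Bssᵀ = -Bss)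
    -- (1) `(Axy + λ Bxy)ᵀ` has trivial kernel for every `λ ∈ ℂ ∪ {∞}`
    (h1 : ∀ lam : ℂ, ∀ u : Fin p → ℂ,
      (Axy + lam • Bxy)ᵀ.mulVec u = 0 → u = 0)
    (h1inf : ∀ u : Fin p → ℂ, Bxyᵀ.mulVec u = 0 → u = 0)
    -- (2) `Ass + λ₀ Bss` is nondegenerate for some `λ₀ ∈ ℂ ∪ {∞}`
    (h2 : (∃ lam₀ : ℂ, IsUnit (Ass + lam₀ • Bss).det) ∨ IsUnit Bss.det) :
    ∃ T : Matrix (Fin p ⊕ (Fin s ⊕ Fin t)) (Fin p ⊕ (Fin s ⊕ Fin t)) ℂ,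
      IsUnit T.det ∧
      Tᵀ * triMat Axx Axs Axy Ass * T = triMat 0 0 Axy Ass ∧
      Tᵀ * triMat Bxx Bxs Bxy Bss * T = triMat 0 0 Bxy Bss := by
  have hK : PencilFullRowRank Axy Bxy := PencilFullRowRank.of_transpose_mulVec h1 h1inf
  obtain ⟨X, Z, hXA, hXB⟩ := hK.exists_mul_add_mul_eq h2 (-Axs) (-Bxs)
  obtain ⟨Y, hYA, hYB⟩ := hK.exists_mul_sub_transpose_eq
    (C := -shearCorner Axx Axs Ass X) (D := -shearCorner Bxx Bxs Bss X)
    (by rw [transpose_neg, transpose_shearCorner Axs hAxx hAss])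
    (by rw [transpose_neg, transpose_shearCorner Bxs hBxx hBss])
  refine ⟨blockShear X Y Z, by rw [det_blockShear]; exact isUnit_one, ?_, ?_⟩
  · rw [transpose_blockShear_mul_triMat_mul _ _ _ _ _ _ hAss, hYA, add_neg_cancel, add_assoc,
      hXA, add_neg_cancel]
  · rw [transpose_blockShear_mul_triMat_mul _ _ _ _ _ _ hBss, hYB, add_neg_cancel, add_assoc,
      hXB, add_neg_cancel]

end
end

section
/- Let p, s, t ∈ ℕ and let A_xx, B_xx be skew-symmetric p×p, A_xs, B_xs be p×s, A_xy, B_xy be p×t, and A_ss, B_ss be skew-symmetric s×s complex matrices, and form A = [[A_xx, A_xs, A_xy],[−A_xsᵀ, A_ss, 0],[−A_xyᵀ, 0, 0]] and B = [[B_xx, B_xs, B_xy],[−B_xsᵀ, B_ss, 0],[−B_xyᵀ, 0, 0]]. Then for every λ ∈ ℂ such that (A_xy + λB_xy)ᵀ has trivial kernel and A_ss + λB_ss is invertible, the kernel of A + λB equals { (u,v,y) ∈ ℂ^p × ℂ^s × ℂ^t : u = 0, v = 0, and (A_xy + λB_xy)·y = 0 }. -/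
/-!
`A + λB` is again of the block form, with blocks `Cxx = Axx + λBxx`, etc., and it is block
triangular enough to solve `(A + λB)(u, v, y) = 0` from the bottom up: the last block row says
`Cxyᵀ u = 0`, so `u = 0`; the middle one then says `Css v = 0`, so `v = 0`; and what is left of
the first one is `Cxy y = 0`.
-/

open Matrix

noncomputable section

namespace triMat

variable {p s t : ℕ}

lemma add_smul (Axx Bxx : Matrix (Fin p) (Fin p) ℂ)
    (Axs Bxs : Matrix (Fin p) (Fin s) ℂ) (Axy Bxy : Matrix (Fin p) (Fin t) ℂ)
    (Ass Bss : Matrix (Fin s) (Fin s) ℂ) (c : ℂ) :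
    triMat Axx Axs Axy Ass + c • triMat Bxx Bxs Bxy Bss =
      triMat (Axx + c • Bxx) (Axs + c • Bxs) (Axy + c • Bxy) (Ass + c • Bss) := by
  ext (i | i | i) (j | j | j) <;> simp [triMat] <;> ring

variable (Cxx : Matrix (Fin p) (Fin p) ℂ) (Cxs : Matrix (Fin p) (Fin s) ℂ)
    (Cxy : Matrix (Fin p) (Fin t) ℂ) (Css : Matrix (Fin s) (Fin s) ℂ)

lemma mulVec_sumElim (u : Fin p → ℂ) (v : Fin s → ℂ) (y : Fin t → ℂ) :
    triMat Cxx Cxs Cxy Css *ᵥ Sum.elim u (Sum.elim v y) =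
      Sum.elim (Cxx *ᵥ u + Cxs *ᵥ v + Cxy *ᵥ y)
        (Sum.elim (Css *ᵥ v - Cxsᵀ *ᵥ u) (-(Cxyᵀ *ᵥ u))) := by
  ext (i | i | i) <;>
    simp [triMat, fromBlocks_mulVec, fromRows_mulVec, neg_mulVec, add_assoc, sub_eq_neg_add]

lemma mulVec_sumElim_eq_zero_iff (hCxy : ∀ u, Cxyᵀ *ᵥ u = 0 → u = 0)
    (hCss : IsUnit Css.det) (u : Fin p → ℂ) (v : Fin s → ℂ) (y : Fin t → ℂ) :
    triMat Cxx Cxs Cxy Css *ᵥ Sum.elim u (Sum.elim v y) = 0 ↔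
      u = 0 ∧ v = 0 ∧ Cxy *ᵥ y = 0 := by
  rw [mulVec_sumElim, ← Sum.elim_zero_zero, ← Sum.elim_zero_zero, Sum.elim_eq_iff,
    Sum.elim_eq_iff, neg_eq_zero]
  constructor
  · rintro ⟨hx, hs, hy⟩
    obtain rfl := hCxy u hy
    obtain rfl : v = 0 :=
      mulVec_injective_of_isUnit ((isUnit_iff_isUnit_det Css).2 hCss) (by simpa using hs)
    simpa using hx
  · rintro ⟨rfl, rfl, hy⟩
    simpa using hy

end triMat

theorem kernel_of_block_upper_triangular_pencil_general
    (p s t : ℕ)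
    (Axx Bxx : Matrix (Fin p) (Fin p) ℂ)
    (Axs Bxs : Matrix (Fin p) (Fin s) ℂ)
    (Axy Bxy : Matrix (Fin p) (Fin t) ℂ)
    (Ass Bss : Matrix (Fin s) (Fin s) ℂ) :
    ∀ lam : ℂ,
      (∀ u : Fin p → ℂ, (Axy + lam • Bxy)ᵀ.mulVec u = 0 → u = 0) →
      IsUnit (Ass + lam • Bss).det →
      {w : (Fin p ⊕ (Fin s ⊕ Fin t)) → ℂ |
          (triMat Axx Axs Axy Ass + lam • triMat Bxx Bxs Bxy Bss).mulVec w = 0} =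
        {w : (Fin p ⊕ (Fin s ⊕ Fin t)) → ℂ |
          (∀ i : Fin p, w (Sum.inl i) = 0) ∧
          (∀ i : Fin s, w (Sum.inr (Sum.inl i)) = 0) ∧
          (Axy + lam • Bxy).mulVec (fun i => w (Sum.inr (Sum.inr i))) = 0} := by
  intro lam hCxy hCss
  ext w
  obtain ⟨u, v, y, rfl⟩ : ∃ u v y, w = Sum.elim u (Sum.elim v y) :=
    ⟨_, _, _, by ext (i | i | i) <;> rfl⟩
  rw [Set.mem_ofPred_eq, triMat.add_smul, triMat.mulVec_sumElim_eq_zero_iff _ _ _ _ hCxy hCss]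
  simp only [Set.mem_ofPred_eq, Sum.elim_inl, Sum.elim_inr, funext_iff, Pi.zero_apply]

/-- For regular values `λ`, the kernel of `A + λ B` of a block upper-triangular
skew-symmetric pencil is `{(0, 0, y) : (Axy + λ Bxy) y = 0}`. -/
theorem kernel_of_block_upper_triangular_pencil
    (p s t : ℕ)
    (Axx Bxx : Matrix (Fin p) (Fin p) ℂ)
    (Axs Bxs : Matrix (Fin p) (Fin s) ℂ)
    (Axy Bxy : Matrix (Fin p) (Fin t) ℂ)
    (Ass Bss : Matrix (Fin s) (Fin s) ℂ)
    (hAxx : Axxᵀ = -Axx) (hBxx : Bxxᵀ = -Bxx)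
    (hAss : Assᵀ = -Ass) (hBss : Bssᵀ = -Bss) :
    ∀ lam : ℂ,
      (∀ u : Fin p → ℂ, (Axy + lam • Bxy)ᵀ.mulVec u = 0 → u = 0) →
      IsUnit (Ass + lam • Bss).det →
      {w : (Fin p ⊕ (Fin s ⊕ Fin t)) → ℂ |
          (triMat Axx Axs Axy Ass + lam • triMat Bxx Bxs Bxy Bss).mulVec w = 0} =
        {w : (Fin p ⊕ (Fin s ⊕ Fin t)) → ℂ |
          (∀ i : Fin p, w (Sum.inl i) = 0) ∧
          (∀ i : Fin s, w (Sum.inr (Sum.inl i)) = 0) ∧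
          (Axy + lam • Bxy).mulVec (fun i => w (Sum.inr (Sum.inr i))) = 0} :=
  kernel_of_block_upper_triangular_pencil_general p s t Axx Bxx Axs Bxs Axy Bxy Ass Bss

end
end

section
/- Let p, s, t ∈ ℕ and let A_xx, B_xx be skew-symmetric p×p, A_xs, B_xs be p×s, A_xy, B_xy be p×t, and A_ss, B_ss be skew-symmetric s×s complex matrices, and form A = [[A_xx, A_xs, A_xy],[−A_xsᵀ, A_ss, 0],[−A_xyᵀ, 0, 0]] and B = [[B_xx, B_xs, B_xy],[−B_xsᵀ, B_ss, 0],[−B_xyᵀ, 0, 0]]. Assume: (1) for every λ ∈ ℂ the matrix (A_xy + λB_xy)ᵀ has trivial kernel, and B_xyᵀ has trivial kernel; (2) there exists λ₀ ∈ ℂ such that A_ss + λ₀B_ss is invertible, or B_ss is invertible. Then the linear span of the union, over all λ ∈ ℂ with A_ss + λB_ss invertible, of the kernels of A + λB equals the subspace { (0,0,y) : y ∈ ℂ^t } of ℂ^p × ℂ^s × ℂ^t. (In other words, the core subspace of the pencil A + λB is the third block summand U_y.) -/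
/-!
Write `F(X) = Axy + X • Bxy` over `ℂ[X]`. The block shape of `A + λ B` and the injectivity of
`(Axy + λ Bxy)ᵀ` and of `Ass + λ Bss` confine every kernel vector of `A + λ B` to the third
summand, where the kernel is `ker F(λ)`. So it suffices that the kernels `ker F(λ)`, with `λ`
in the infinite set where `Ass + λ Bss` is invertible, span `ℂ^t`.

Let a row vector `φ` annihilate all of them. With `R` a right inverse of `Axy`, `d = det (F R)`
and `Q = R · adj (F R)` one has `F Q F = d F`, so every column of `d - Q F` lies in `ker F(λ)`
for every `λ`; hence `φ (d - Q F) = 0` identically, i.e. `d φ = N F` for the polynomial row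
`N = φ Q`, with `d ≠ 0` because `d(0) = 1`. At a root `α` of `d` we get `N(α) F(α) = 0`, so
`N(α) = 0` and `X - α` can be cancelled. Once `d` is constant, the top coefficient of `N F` is
`N_top Bxy`, so `N = 0` and `φ = 0`.
-/

open Matrix Polynomial

noncomputable section

namespace Matrix

section CommRing

variable {R : Type*} [CommRing R] {m n : Type*}

/-- Ordered as in `Polynomial.coeff_det_X_add_C_card`. -/
def pencil (A B : Matrix m n R) : Matrix m n R[X] := (X : R[X]) • B.map C + A.map C

theorem pencil_map_eval (A B : Matrix m n R) (c : R) :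
    (pencil A B).map (eval c) = A + c • B := by
  ext i j
  simp [pencil, add_comm, mul_comm c]

theorem eval_det_pencil [Fintype n] [DecidableEq n] (A B : Matrix n n R) (c : R) :
    (pencil A B).det.eval c = (A + c • B).det := by
  rw [← coe_evalRingHom, RingHom.map_det, RingHom.mapMatrix_apply, coe_evalRingHom,
    pencil_map_eval]

variable [Fintype m]

theorem eval_vecMul (v : m → R[X]) (M : Matrix m n R[X]) (c : R) :
    (fun j => (v ᵥ* M) j |>.eval c) = (fun i => (v i).eval c) ᵥ* M.map (eval c) :=
  funext (RingHom.map_vecMul (evalRingHom c) M v)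

theorem eval_vecMul_pencil (A B : Matrix m n R) (N : m → R[X]) (c : R) :
    (fun j => (N ᵥ* pencil A B) j |>.eval c) = (fun i => (N i).eval c) ᵥ* (A + c • B) := by
  rw [eval_vecMul, pencil_map_eval]

theorem coeff_vecMul_pencil_succ (A B : Matrix m n R) (N : m → R[X]) (k : ℕ) :
    (fun j => (N ᵥ* pencil A B) j |>.coeff (k + 1)) =
      (fun i => (N i).coeff (k + 1)) ᵥ* A + (fun i => (N i).coeff k) ᵥ* B := by
  ext j
  simp only [pencil, vecMul, dotProduct, add_apply, smul_apply, map_apply, smul_eq_mul, mul_add,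
    Finset.sum_add_distrib, finsetSum_coeff, coeff_add, mul_left_comm _ X, coeff_X_mul,
    coeff_mul_C, add_comm, Pi.add_apply]

end CommRing

section Field

variable {K : Type*} [Field K] {m n : Type*} [Fintype m] {A B : Matrix m n K}

theorem eq_zero_of_vecMul_pencil_eq_C (hB : ∀ u, u ᵥ* B = 0 → u = 0) {N : m → K[X]}
    {ψ : n → K} (h : N ᵥ* pencil A B = C ∘ ψ) : N = 0 := by
  set D := Finset.univ.sup fun i => (N i).natDegree
  have hcoeff : ∀ k, (fun i => (N i).coeff (k + 1)) ᵥ* A + (fun i => (N i).coeff k) ᵥ* B = 0 := by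
    intro k
    rw [← coeff_vecMul_pencil_succ, h]
    ext j
    simp
  have hvanish : ∀ j k, D < k + j → (fun i => (N i).coeff k) = 0 := by
    intro j
    induction j with
    | zero =>
      intro k hk
      ext i
      exact coeff_eq_zero_of_natDegree_lt ((Finset.le_sup (Finset.mem_univ i)).trans_lt hk)
    | succ j ih =>
      intro k hk
      apply hB
      simpa [ih (k + 1) (by omega)] using hcoeff k
  ext i k
  exact congrFun (hvanish (D + 1) k (by omega)) i

theorem exists_vecMul_pencil_eq_of_eq_X_sub_C_smul {α : K} (hα : ∀ u, u ᵥ* (A + α • B) = 0 → u = 0)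
    {N : m → K[X]} {V : n → K[X]} (h : N ᵥ* pencil A B = (X - C α) • V) :
    ∃ N' : m → K[X], N' ᵥ* pencil A B = V := by
  have hroot : ∀ i, (N i).IsRoot α := by
    refine congrFun (hα _ ?_)
    rw [← eval_vecMul_pencil, h]
    ext j
    simp
  refine ⟨fun i => N i /ₘ (X - C α), smul_right_injective _ (X_sub_C_ne_zero α) ?_⟩
  have hN : (X - C α) • (fun i => N i /ₘ (X - C α)) = N :=
    funext fun i => mul_divByMonic_eq_iff_isRoot.mpr (hroot i)
  simp only [← smul_vecMul, hN, h]

theorem eq_zero_of_vecMul_pencil_eq_smul [IsAlgClosed K]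
    (hA : ∀ (c : K) u, u ᵥ* (A + c • B) = 0 → u = 0) (hB : ∀ u, u ᵥ* B = 0 → u = 0)
    {d : K[X]} (hd : d ≠ 0) {φ : n → K} {N : m → K[X]}
    (h : N ᵥ* pencil A B = d • (C ∘ φ)) : φ = 0 := by
  by_cases hdeg : d.natDegree = 0
  · obtain ⟨c, rfl⟩ := natDegree_eq_zero.mp hdeg
    have hc : c ≠ 0 := by rintro rfl; exact hd C_0
    have hN : N = 0 := eq_zero_of_vecMul_pencil_eq_C hB (ψ := c • φ) (by rw [h]; ext; simp)
    ext j
    simpa [hN, hc] using congrFun h j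
  · obtain ⟨α, hα⟩ := IsAlgClosed.exists_root d fun h => hdeg (natDegree_eq_of_degree_eq_some h)
    have hdα : (X - C α) * (d /ₘ (X - C α)) = d := mul_divByMonic_eq_iff_isRoot.mpr hα
    have hd' : d /ₘ (X - C α) ≠ 0 := by rintro h; rw [h, mul_zero] at hdα; exact hd hdα.symm
    obtain ⟨N', hN'⟩ := exists_vecMul_pencil_eq_of_eq_X_sub_C_smul (hA α)
      (V := (d /ₘ (X - C α)) • (C ∘ φ)) (by rw [h, ← mul_smul, hdα])
    exact eq_zero_of_vecMul_pencil_eq_smul hA hB hd' hN'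
termination_by d.natDegree
decreasing_by rw [natDegree_divByMonic _ (monic_X_sub_C α), natDegree_X_sub_C]; omega

theorem exists_mul_eq_one_of_forall_vecMul_eq_zero [DecidableEq m] [Fintype n] {A : Matrix m n K}
    (hA : ∀ u, u ᵥ* A = 0 → u = 0) : ∃ R : Matrix n m K, A * R = 1 := by
  have hinj : Function.Injective Aᵀ.mulVecLin := by
    rw [← LinearMap.ker_eq_bot, LinearMap.ker_eq_bot']
    exact fun u hu => hA u (by rwa [← mulVec_transpose])
  have hrange : LinearMap.range A.mulVecLin = ⊤ := by
    apply Submodule.eq_top_of_finrank_eq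
    rw [← rank, ← rank_transpose, rank, LinearMap.finrank_range_of_inj hinj]
  exact mulVec_surjective_iff_exists_right_inverse.mp (LinearMap.range_eq_top.mp hrange)

theorem exists_pencil_mul_mul_pencil_eq_smul [DecidableEq m] [Fintype n]
    (hA : ∀ u, u ᵥ* A = 0 → u = 0) (B : Matrix m n K) :
    ∃ d : K[X], d ≠ 0 ∧ ∃ Q : Matrix n m K[X], pencil A B * Q * pencil A B = d • pencil A B := by
  obtain ⟨R, hR⟩ := exists_mul_eq_one_of_forall_vecMul_eq_zero hA
  set P := pencil A B * R.map C
  refine ⟨P.det, fun h => ?_, R.map C * P.adjugate, ?_⟩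
  · have hP : P.map (eval 0) = 1 := by
      rw [← coe_evalRingHom, Matrix.map_mul, coe_evalRingHom, pencil_map_eval, map_map]
      simpa [Function.comp_def] using hR
    have h0 := congrArg (evalRingHom 0) h
    rw [RingHom.map_det, RingHom.mapMatrix_apply, coe_evalRingHom, hP] at h0
    simp at h0
  · rw [← Matrix.mul_assoc, mul_adjugate, Matrix.smul_mul, Matrix.one_mul]

theorem exists_dotProduct_eq_zero_of_span_ne_top [Fintype n] [DecidableEq n] {T : Set (n → K)}
    (hT : Submodule.span K T ≠ ⊤) : ∃ φ : n → K, φ ≠ 0 ∧ ∀ y ∈ T, φ ⬝ᵥ y = 0 := by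
  obtain ⟨f, hf, hfT⟩ :=
    Submodule.exists_dual_map_eq_bot_of_lt_top (lt_top_iff_ne_top.mpr hT) inferInstance
  refine ⟨(dotProductEquiv K n).symm f, by simpa using hf, fun y hy => ?_⟩
  have hfy : f y = 0 := by
    simpa [hfT] using Submodule.mem_map_of_mem (f := f) (Submodule.subset_span hy)
  rwa [← (dotProductEquiv K n).apply_symm_apply f, dotProductEquiv_apply_apply] at hfy

theorem span_ker_add_smul_eq_top [IsAlgClosed K] [DecidableEq m] [Fintype n] [DecidableEq n]
    (hA : ∀ (c : K) u, u ᵥ* (A + c • B) = 0 → u = 0) (hB : ∀ u, u ᵥ* B = 0 → u = 0)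
    {S : Set K} (hS : S.Infinite) :
    Submodule.span K {y | ∃ c ∈ S, (A + c • B) *ᵥ y = 0} = ⊤ := by
  by_contra hne
  obtain ⟨φ, hφ0, hφ⟩ := exists_dotProduct_eq_zero_of_span_ne_top hne
  have hφM : ∀ c ∈ S, ∀ M : Matrix n n K, (A + c • B) * M = 0 → φ ᵥ* M = 0 :=
    fun c hc M hM => funext fun j => by
      rw [Pi.zero_apply, ← dotProduct_single_one (φ ᵥ* M), ← dotProduct_mulVec]
      exact hφ _ ⟨c, hc, by rw [mulVec_mulVec, hM, zero_mulVec]⟩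
  obtain ⟨d, hd, Q, hQ⟩ := exists_pencil_mul_mul_pencil_eq_smul (by simpa using hA 0) B
  have hker : pencil A B * (d • 1 - Q * pencil A B) = 0 := by
    rw [Matrix.mul_sub, Matrix.mul_smul, Matrix.mul_one, ← Matrix.mul_assoc, hQ, sub_self]
  have hφker : (C ∘ φ) ᵥ* (d • 1 - Q * pencil A B) = 0 := by
    funext j
    refine eq_zero_of_infinite_isRoot _ (hS.mono fun c hc => ?_)
    have hev := congrFun (eval_vecMul (C ∘ φ) (d • 1 - Q * pencil A B) c) j
    simp only [Function.comp_apply, eval_C] at hev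
    rw [Set.mem_ofPred_eq, IsRoot.def, hev, hφM c hc _ (by
      rw [← pencil_map_eval, ← coe_evalRingHom, ← Matrix.map_mul, hker,
        Matrix.map_zero _ (map_zero _)])]
    rfl
  refine hφ0 (eq_zero_of_vecMul_pencil_eq_smul hA hB hd (N := (C ∘ φ) ᵥ* Q) ?_)
  rwa [vecMul_sub, vecMul_smul, vecMul_one, ← vecMul_vecMul, sub_eq_zero, eq_comm] at hφker

theorem infinite_setOf_isUnit_det_add_smul [Infinite K] [Fintype n] [DecidableEq n]
    {A B : Matrix n n K} (h : (∃ c : K, IsUnit (A + c • B).det) ∨ IsUnit B.det) :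
    {c : K | IsUnit (A + c • B).det}.Infinite := by
  have hdet : (pencil A B).det ≠ 0 := by
    rcases h with ⟨c, hc⟩ | hB
    · exact fun h0 => hc.ne_zero (by rw [← eval_det_pencil, h0, eval_zero])
    · exact fun h0 => hB.ne_zero (by
        rw [← coeff_det_X_add_C_card B A]
        exact congrArg (coeff · _) h0)
  refine (finite_setOfPred_isRoot hdet).infinite_compl.mono fun c hc => ?_
  exact isUnit_iff_ne_zero.mpr (by rwa [← eval_det_pencil])

end Field

end Matrix

section Blocks

variable (R : Type*) [Semiring R] {α β γ : Type*}

def inclThirdBlock : (γ → R) →ₗ[R] (α ⊕ (β ⊕ γ) → R) where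
  toFun y := Sum.elim 0 (Sum.elim 0 y)
  map_add' y z := by ext (_ | _ | _) <;> simp
  map_smul' c y := by ext (_ | _ | _) <;> simp

theorem coe_range_inclThirdBlock :
    (LinearMap.range (inclThirdBlock R : (γ → R) →ₗ[R] (α ⊕ (β ⊕ γ) → R)) : Set (α ⊕ (β ⊕ γ) → R)) =
      {w | (∀ i, w (Sum.inl i) = 0) ∧ ∀ i, w (Sum.inr (Sum.inl i)) = 0} := by
  ext w
  constructor
  · rintro ⟨y, rfl⟩
    simp [inclThirdBlock]
  · rintro ⟨hx, hs⟩
    refine ⟨w ∘ Sum.inr ∘ Sum.inr, ?_⟩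
    ext (i | i | i) <;> simp [inclThirdBlock, hx, hs]

end Blocks

section TriMat

variable {p s t : ℕ}

theorem triMat_add_smul (Axx Bxx : Matrix (Fin p) (Fin p) ℂ) (Axs Bxs : Matrix (Fin p) (Fin s) ℂ)
    (Axy Bxy : Matrix (Fin p) (Fin t) ℂ) (Ass Bss : Matrix (Fin s) (Fin s) ℂ) (c : ℂ) :
    triMat Axx Axs Axy Ass + c • triMat Bxx Bxs Bxy Bss =
      triMat (Axx + c • Bxx) (Axs + c • Bxs) (Axy + c • Bxy) (Ass + c • Bss) := by
  ext (i | i | i) (j | j | j) <;> simp [triMat, add_comm]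

theorem triMat_mulVec_eq_zero_iff {Xxx : Matrix (Fin p) (Fin p) ℂ}
    {Xxs : Matrix (Fin p) (Fin s) ℂ} {Xxy : Matrix (Fin p) (Fin t) ℂ}
    {Xss : Matrix (Fin s) (Fin s) ℂ} (hss : IsUnit Xss.det)
    (hxy : ∀ u, Xxyᵀ *ᵥ u = 0 → u = 0) {w : Fin p ⊕ (Fin s ⊕ Fin t) → ℂ} :
    triMat Xxx Xxs Xxy Xss *ᵥ w = 0 ↔ ∃ y, Xxy *ᵥ y = 0 ∧ inclThirdBlock ℂ y = w := by
  simp only [triMat, fromBlocks_mulVec, fromCols_mulVec, fromRows_mulVec, zero_mulVec, add_zero,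
    neg_mulVec]
  constructor
  · intro hw
    have hu : w ∘ Sum.inl = 0 :=
      hxy _ (funext fun i => by simpa using congrFun hw (Sum.inr (Sum.inr i)))
    have hv : (w ∘ Sum.inr) ∘ Sum.inl = 0 := eq_zero_of_mulVec_eq_zero hss.ne_zero
      (funext fun i => by simpa [hu] using congrFun hw (Sum.inr (Sum.inl i)))
    refine ⟨(w ∘ Sum.inr) ∘ Sum.inr, funext fun i => ?_, ?_⟩
    · simpa [hu, hv] using congrFun hw (Sum.inl i)
    · ext (i | i | i)
      · exact (congrFun hu i).symm
      · exact (congrFun hv i).symm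
      · rfl
  · rintro ⟨y, hy, rfl⟩
    simp [inclThirdBlock, hy]

end TriMat

theorem core_of_block_upper_triangular_pencil_general
    (p s t : ℕ)
    (Axx Bxx : Matrix (Fin p) (Fin p) ℂ)
    (Axs Bxs : Matrix (Fin p) (Fin s) ℂ)
    (Axy Bxy : Matrix (Fin p) (Fin t) ℂ)
    (Ass Bss : Matrix (Fin s) (Fin s) ℂ)
    -- (1) `(Axy + λ Bxy)ᵀ` has trivial kernel for every `λ ∈ ℂ ∪ {∞}`
    (h1 : ∀ lam : ℂ, ∀ u : Fin p → ℂ,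
      (Axy + lam • Bxy)ᵀ.mulVec u = 0 → u = 0)
    (h1inf : ∀ u : Fin p → ℂ, Bxyᵀ.mulVec u = 0 → u = 0)
    -- (2) `Ass + λ₀ Bss` is nondegenerate for some `λ₀ ∈ ℂ ∪ {∞}`
    (h2 : (∃ lam₀ : ℂ, IsUnit (Ass + lam₀ • Bss).det) ∨ IsUnit Bss.det) :
    (Submodule.span ℂ
        {w : (Fin p ⊕ (Fin s ⊕ Fin t)) → ℂ |
          ∃ lam : ℂ, IsUnit (Ass + lam • Bss).det ∧
            (triMat Axx Axs Axy Ass + lam • triMat Bxx Bxs Bxy Bss).mulVec w = 0} :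
      Set ((Fin p ⊕ (Fin s ⊕ Fin t)) → ℂ)) =
      {w : (Fin p ⊕ (Fin s ⊕ Fin t)) → ℂ |
        (∀ i : Fin p, w (Sum.inl i) = 0) ∧
        (∀ i : Fin s, w (Sum.inr (Sum.inl i)) = 0)} := by
  have hker : ∀ {c : ℂ}, IsUnit (Ass + c • Bss).det → ∀ w,
      (triMat Axx Axs Axy Ass + c • triMat Bxx Bxs Bxy Bss) *ᵥ w = 0 ↔
        ∃ y, (Axy + c • Bxy) *ᵥ y = 0 ∧ inclThirdBlock ℂ y = w := fun hc w => by
    rw [triMat_add_smul, triMat_mulVec_eq_zero_iff hc (h1 _)]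
  have hgen : {w | ∃ c : ℂ, IsUnit (Ass + c • Bss).det ∧
        (triMat Axx Axs Axy Ass + c • triMat Bxx Bxs Bxy Bss) *ᵥ w = 0} =
      inclThirdBlock ℂ '' {y | ∃ c ∈ {c : ℂ | IsUnit (Ass + c • Bss).det},
        (Axy + c • Bxy) *ᵥ y = 0} := by
    ext w
    constructor
    · rintro ⟨c, hc, hw⟩
      obtain ⟨y, hy, rfl⟩ := (hker hc w).mp hw
      exact ⟨y, ⟨c, hc, hy⟩, rfl⟩
    · rintro ⟨y, ⟨c, hc, hy⟩, rfl⟩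
      exact ⟨c, hc, (hker hc _).mpr ⟨y, hy, rfl⟩⟩
  rw [hgen, Submodule.span_image,
    span_ker_add_smul_eq_top (fun c u hu => h1 c u (by rwa [mulVec_transpose]))
      (fun u hu => h1inf u (by rwa [mulVec_transpose])) (infinite_setOf_isUnit_det_add_smul h2),
    Submodule.map_top, coe_range_inclThirdBlock]

/-- The core subspace of a block upper-triangular skew-symmetric pencil — the
span of the kernels of `A + λ B` over all `λ` with `Ass + λ Bss` invertible —
is the third block summand `U_y = {(0, 0, y)}`. -/
theorem core_of_block_upper_triangular_pencil
    (p s t : ℕ)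
    (Axx Bxx : Matrix (Fin p) (Fin p) ℂ)
    (Axs Bxs : Matrix (Fin p) (Fin s) ℂ)
    (Axy Bxy : Matrix (Fin p) (Fin t) ℂ)
    (Ass Bss : Matrix (Fin s) (Fin s) ℂ)
    (hAxx : Axxᵀ = -Axx) (hBxx : Bxxᵀ = -Bxx)
    (hAss : Assᵀ = -Ass) (hBss : Bssᵀ = -Bss)
    -- (1) `(Axy + λ Bxy)ᵀ` has trivial kernel for every `λ ∈ ℂ ∪ {∞}`
    (h1 : ∀ lam : ℂ, ∀ u : Fin p → ℂ,
      (Axy + lam • Bxy)ᵀ.mulVec u = 0 → u = 0)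
    (h1inf : ∀ u : Fin p → ℂ, Bxyᵀ.mulVec u = 0 → u = 0)
    -- (2) `Ass + λ₀ Bss` is nondegenerate for some `λ₀ ∈ ℂ ∪ {∞}`
    (h2 : (∃ lam₀ : ℂ, IsUnit (Ass + lam₀ • Bss).det) ∨ IsUnit Bss.det) :
    (Submodule.span ℂ
        {w : (Fin p ⊕ (Fin s ⊕ Fin t)) → ℂ |
          ∃ lam : ℂ, IsUnit (Ass + lam • Bss).det ∧
            (triMat Axx Axs Axy Ass + lam • triMat Bxx Bxs Bxy Bss).mulVec w = 0} :
      Set ((Fin p ⊕ (Fin s ⊕ Fin t)) → ℂ)) =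
      {w : (Fin p ⊕ (Fin s ⊕ Fin t)) → ℂ |
        (∀ i : Fin p, w (Sum.inl i) = 0) ∧
        (∀ i : Fin s, w (Sum.inr (Sum.inl i)) = 0)} :=
  core_of_block_upper_triangular_pencil_general p s t Axx Bxx Axs Bxs Axy Bxy Ass Bss h1 h1inf h2

end
end

section
/- Let k ≥ 1 and let (A_K, B_K) be the skew Kronecker block of size 2k−1, i.e. A_K = fromBlocks 0 G_{k−1} (−G_{k−1}ᵀ) 0 and B_K = fromBlocks 0 F_{k−1} (−F_{k−1}ᵀ) 0, where the first k−1 coordinates of ℂ^{2k−1} form the first block and the last k coordinates form the second block. Then for every λ ∈ ℂ the kernel of A_K + λB_K is one-dimensional and contained in the span of the last k standard basis vectors, and the linear span of the union over all λ ∈ ℂ of the kernels of A_K + λB_K equals the span of the last k standard basis vectors of ℂ^{2k−1}. (That is, the core subspace of a Kronecker block is spanned by the vectors f_1,…,f_k of its standard basis.) -/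
open Matrix

noncomputable section

/-- The `k × (k+1)` matrix `F_k` with `1` in the entries `(i, i+1)`. -/
def Fmat (k : ℕ) : Matrix (Fin k) (Fin (k + 1)) ℂ :=
  Matrix.of fun i j => if (j : ℕ) = (i : ℕ) + 1 then 1 else 0

/-- The `k × (k+1)` matrix `G_k` with `1` in the entries `(i, i)`. -/
def Gmat (k : ℕ) : Matrix (Fin k) (Fin (k + 1)) ℂ :=
  Matrix.of fun i j => if (j : ℕ) = (i : ℕ) then 1 else 0

/-- The `A`-part of the skew Kronecker block of size `2k' + 1` (Kronecker index `k' + 1`). -/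
def skewKronA (k' : ℕ) : Matrix (Fin k' ⊕ Fin (k' + 1)) (Fin k' ⊕ Fin (k' + 1)) ℂ :=
  Matrix.fromBlocks 0 (Gmat k') (-(Gmat k')ᵀ) 0

/-- The `B`-part of the skew Kronecker block of size `2k' + 1` (Kronecker index `k' + 1`). -/
def skewKronB (k' : ℕ) : Matrix (Fin k' ⊕ Fin (k' + 1)) (Fin k' ⊕ Fin (k' + 1)) ℂ :=
  Matrix.fromBlocks 0 (Fmat k') (-(Fmat k')ᵀ) 0

lemma sum_ite_val {n : ℕ} (f : Fin n → ℂ) (c : ℕ) :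
    (∑ j : Fin n, if (j : ℕ) = c then f j else 0)
      = if h : c < n then f ⟨c, h⟩ else 0 := by
  split_ifs with h
  · rw [Finset.sum_eq_single (⟨c, h⟩ : Fin n)]
    · simp
    · intro b _ hb; simp [Fin.ext_iff] at hb ⊢; omega
    · simp
  · apply Finset.sum_eq_zero
    intro j _
    have := j.isLt
    simp only [ite_eq_right_iff]
    intro hj; omega

lemma sum_ite_val' {n : ℕ} (f : Fin n → ℂ) (c : ℕ) (p : Prop) [Decidable p] :
    (∑ j : Fin n, if (j : ℕ) = c ∧ p then f j else 0)
      = if h : c < n ∧ p then f ⟨c, h.1⟩ else 0 := by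
  by_cases hp : p
  · simp only [hp, and_true, sum_ite_val]
  · simp [hp]

lemma mv_inl (k' : ℕ) (lam : ℂ) (w : (Fin k' ⊕ Fin (k'+1)) → ℂ) (i : Fin k') :
    (skewKronA k' + lam • skewKronB k').mulVec w (Sum.inl i) =
      w (Sum.inr ⟨i, by omega⟩) + lam * w (Sum.inr ⟨(i:ℕ)+1, by omega⟩) := by
  have hi : (i:ℕ) < k' := i.isLt
  simp only [mulVec, dotProduct, Fintype.sum_sum_type, skewKronA, skewKronB,
    Matrix.add_apply, Matrix.smul_apply, fromBlocks_apply₁₁, fromBlocks_apply₁₂,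
    Matrix.zero_apply, Gmat, Fmat, Matrix.of_apply, smul_eq_mul]
  rw [show (∑ j : Fin (k'+1), ((if (j:ℕ) = (i:ℕ) then (1:ℂ) else 0) + lam * if (j:ℕ) = (i:ℕ)+1 then 1 else 0) * w (Sum.inr j))
      = (∑ j : Fin (k'+1), if (j:ℕ) = (i:ℕ) then w (Sum.inr j) else 0)
        + lam * ∑ j : Fin (k'+1), if (j:ℕ) = (i:ℕ)+1 then w (Sum.inr j) else 0 by
    rw [Finset.mul_sum, ← Finset.sum_add_distrib]
    apply Finset.sum_congr rfl
    intro j _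
    split_ifs <;> first | (exfalso; omega) | ring1]
  rw [sum_ite_val, sum_ite_val]
  simp only [zero_add, mul_zero, zero_mul, add_zero, Finset.sum_const_zero,
    dif_pos (show (i:ℕ) < k'+1 by omega), dif_pos (show (i:ℕ)+1 < k'+1 by omega)]

lemma mv_inr (k' : ℕ) (lam : ℂ) (w : (Fin k' ⊕ Fin (k'+1)) → ℂ) (j : Fin (k'+1)) :
    (skewKronA k' + lam • skewKronB k').mulVec w (Sum.inr j) =
      -((if h : (j:ℕ) < k' then w (Sum.inl ⟨j, h⟩) else 0)
        + lam * (if h : 1 ≤ (j:ℕ) then w (Sum.inl ⟨(j:ℕ)-1, by omega⟩) else 0)) := by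
  have hj : (j:ℕ) < k' + 1 := j.isLt
  simp only [mulVec, dotProduct, Fintype.sum_sum_type, skewKronA, skewKronB,
    Matrix.add_apply, Matrix.smul_apply, fromBlocks_apply₂₁, fromBlocks_apply₂₂,
    Matrix.zero_apply, Matrix.neg_apply, Matrix.transpose_apply,
    Gmat, Fmat, Matrix.of_apply, smul_eq_mul]
  rw [show (∑ i : Fin k', (-(if (j:ℕ) = (i:ℕ) then (1:ℂ) else 0) + lam * -(if (j:ℕ) = (i:ℕ)+1 then 1 else 0)) * w (Sum.inl i))
      = -((∑ i : Fin k', if (i:ℕ) = (j:ℕ) then w (Sum.inl i) else 0)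
        + lam * ∑ i : Fin k', if (i:ℕ) = (j:ℕ)-1 ∧ 1 ≤ (j:ℕ) then w (Sum.inl i) else 0) by
    rw [Finset.mul_sum, ← Finset.sum_add_distrib, ← Finset.sum_neg_distrib]
    apply Finset.sum_congr rfl
    intro i _
    have := i.isLt
    split_ifs <;> first | (exfalso; omega) | ring1]
  rw [sum_ite_val, sum_ite_val']
  simp only [zero_add, mul_zero, zero_mul, add_zero, Finset.sum_const_zero]
  congr 1
  congr 1
  split_ifs with h1 h2 h2 <;> first | rfl | omega

/-- The kernel vector of the pencil at parameter `lam`. -/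
def kvec (k' : ℕ) (lam : ℂ) : (Fin k' ⊕ Fin (k' + 1)) → ℂ :=
  Sum.elim 0 fun j => (-lam) ^ (k' - (j : ℕ))

lemma kvec_ker (k' : ℕ) (lam : ℂ) :
    (skewKronA k' + lam • skewKronB k').mulVec (kvec k' lam) = 0 := by
  funext x
  cases x with
  | inl i =>
    rw [mv_inl]
    have hi : (i:ℕ) < k' := i.isLt
    simp only [kvec, Sum.elim_inr]
    have : k' - (i:ℕ) = (k' - ((i:ℕ)+1)) + 1 := by omega
    rw [this, pow_succ]
    ring_nf
    simp [Pi.zero_apply]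
  | inr j =>
    rw [mv_inr]
    simp only [kvec, Sum.elim_inl]
    split_ifs <;> simp

lemma ker_inl_zero (k' : ℕ) (lam : ℂ) (w : (Fin k' ⊕ Fin (k'+1)) → ℂ)
    (hw : (skewKronA k' + lam • skewKronB k').mulVec w = 0) :
    ∀ i : Fin k', w (Sum.inl i) = 0 := by
  have key : ∀ m : ℕ, ∀ h : m < k', w (Sum.inl ⟨m, h⟩) = 0 := by
    intro m
    induction m using Nat.strong_induction_on with
    | _ m ih =>
      intro h
      have h0 := congrFun hw (Sum.inr ⟨m, by omega⟩)
      rw [mv_inr] at h0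
      simp only [Pi.zero_apply] at h0
      rcases Nat.eq_zero_or_pos m with hm | hm
      · subst hm
        rw [dif_pos h, dif_neg (by omega)] at h0
        simpa using h0
      · rw [dif_pos h, dif_pos (by omega : 1 ≤ m)] at h0
        rw [ih (m-1) (by omega) (by omega)] at h0
        simpa using h0
  intro i
  have := key i i.isLt
  simpa using this

lemma ker_inr (k' : ℕ) (lam : ℂ) (w : (Fin k' ⊕ Fin (k'+1)) → ℂ)
    (hw : (skewKronA k' + lam • skewKronB k').mulVec w = 0) :
    ∀ j : Fin (k'+1), w (Sum.inr j) =
      (-lam) ^ (k' - (j:ℕ)) * w (Sum.inr ⟨k', by omega⟩) := by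
  have key : ∀ d : ℕ, d ≤ k' → w (Sum.inr ⟨k' - d, by omega⟩) =
      (-lam) ^ d * w (Sum.inr ⟨k', by omega⟩) := by
    intro d
    induction d with
    | zero => intro _; simp
    | succ d ih =>
      intro hd
      have h0 := congrFun hw (Sum.inl ⟨k' - (d+1), by omega⟩)
      rw [mv_inl] at h0
      simp only [Pi.zero_apply] at h0
      have he : k' - (d+1) + 1 = k' - d := by omega
      rw [show ((⟨k' - (d+1) + 1, by omega⟩ : Fin (k'+1))) = ⟨k' - d, by omega⟩ by
        simp [Fin.ext_iff, he]] at h0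
      rw [ih (by omega)] at h0
      have : w (Sum.inr ⟨k' - (d+1), by omega⟩) = -(lam * ((-lam)^d * w (Sum.inr ⟨k', by omega⟩))) := by
        linear_combination h0
      rw [this, pow_succ]
      ring
  intro j
  have hj : (j:ℕ) ≤ k' := by omega
  have := key (k' - (j:ℕ)) (by omega)
  rw [show ((⟨k' - (k' - (j:ℕ)), by omega⟩ : Fin (k'+1))) = j by
    simp [Fin.ext_iff]; omega] at this
  exact this

lemma ker_eq_span (k' : ℕ) (lam : ℂ) :
    LinearMap.ker (skewKronA k' + lam • skewKronB k').mulVecLin =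
      Submodule.span ℂ {kvec k' lam} := by
  apply le_antisymm
  · intro w hw
    rw [LinearMap.mem_ker, mulVecLin_apply] at hw
    rw [Submodule.mem_span_singleton]
    refine ⟨w (Sum.inr ⟨k', by omega⟩), ?_⟩
    funext x
    cases x with
    | inl i =>
      simp only [Pi.smul_apply, kvec, Sum.elim_inl, Pi.zero_apply, smul_eq_mul, mul_zero]
      exact (ker_inl_zero k' lam w hw i).symm
    | inr j =>
      simp only [Pi.smul_apply, kvec, Sum.elim_inr, smul_eq_mul]
      rw [ker_inr k' lam w hw j]
      ring
  · rw [Submodule.span_le, Set.singleton_subset_iff]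
    rw [SetLike.mem_coe, LinearMap.mem_ker, mulVecLin_apply]
    exact kvec_ker k' lam

lemma kvec_ne_zero (k' : ℕ) (lam : ℂ) : kvec k' lam ≠ 0 := by
  intro h
  have := congrFun h (Sum.inr ⟨k', by omega⟩)
  simp [kvec] at this

/-- The Vandermonde-type matrix whose rows are the `inr`-parts of kernel vectors. -/
def Wmat (k' : ℕ) : Matrix (Fin (k'+1)) (Fin (k'+1)) ℂ :=
  Matrix.of fun t j => (-((t:ℕ):ℂ)) ^ (k' - (j:ℕ))

lemma Wmat_eq (k' : ℕ) :
    Wmat k' = (Matrix.vandermonde fun t : Fin (k'+1) => -((t:ℕ):ℂ)).submatrix id Fin.rev := by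
  ext t j
  simp only [Wmat, Matrix.of_apply, Matrix.submatrix_apply, Matrix.vandermonde, id]
  congr 1
  simp [Fin.rev]

lemma Wmat_det_ne_zero (k' : ℕ) : (Wmat k').det ≠ 0 := by
  rw [Wmat_eq]
  rw [show (Fin.rev : Fin (k'+1) → Fin (k'+1)) = (Fin.revPerm : Equiv.Perm (Fin (k'+1))) from rfl]
  rw [Matrix.det_permute']
  simp only [ne_eq, mul_eq_zero, not_or]
  constructor
  · simp
  · rw [Matrix.det_vandermonde]
    apply Finset.prod_ne_zero_iff.mpr
    intro i _
    apply Finset.prod_ne_zero_iff.mpr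
    intro j hj
    simp only [Finset.mem_Ioi] at hj
    have : (i:ℕ) < (j:ℕ) := hj
    intro h
    have : ((j:ℕ):ℂ) = ((i:ℕ):ℂ) := by linear_combination -h
    have := Nat.cast_injective (R := ℂ) this
    omega

lemma single_mem (k' : ℕ) (j : Fin (k'+1)) :
    Pi.single (Sum.inr j) (1:ℂ) ∈ Submodule.span ℂ
      {w : (Fin k' ⊕ Fin (k' + 1)) → ℂ |
        ∃ lam : ℂ, (skewKronA k' + lam • skewKronB k').mulVec w = 0} := by
  have hW : (Wmat k')⁻¹ * Wmat k' = 1 :=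
    Matrix.nonsing_inv_mul _ (isUnit_iff_ne_zero.mpr (Wmat_det_ne_zero k'))
  have key : Pi.single (Sum.inr j) (1:ℂ)
      = ∑ t : Fin (k'+1), (Wmat k')⁻¹ j t • kvec k' ((t:ℕ):ℂ) := by
    funext x
    rw [Finset.sum_apply]
    cases x with
    | inl i => simp [kvec, Pi.single_apply]
    | inr s =>
      have h2 : ∀ t : Fin (k'+1),
          ((Wmat k')⁻¹ j t • kvec k' ((t:ℕ):ℂ)) (Sum.inr s) = (Wmat k')⁻¹ j t * Wmat k' t s := by
        intro t; simp [kvec, Wmat]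
      rw [Finset.sum_congr rfl (fun t _ => h2 t), ← Matrix.mul_apply, hW]
      rw [Matrix.one_apply, Pi.single_apply]
      simp only [Sum.inr.injEq]
      split_ifs with h1 h2 h2 <;> first | rfl | (exfalso; exact h2 h1.symm) | (exfalso; exact h1 h2.symm)
  rw [key]
  exact Submodule.sum_mem _ fun t _ => Submodule.smul_mem _ _
    (Submodule.subset_span ⟨((t:ℕ):ℂ), kvec_ker k' ((t:ℕ):ℂ)⟩)

/-- For the skew Kronecker block of size `2(k'+1) − 1` (Kronecker index `k = k'+1`),
for every `λ ∈ ℂ` the kernel of `A_K + λ B_K` is one-dimensional and contained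
in the span of the last `k'+1` standard basis vectors, and the span of the
union of these kernels (the core subspace) is exactly the span of the last
`k'+1` standard basis vectors. -/
theorem core_of_skew_kronecker_block (k' : ℕ) :
    (∀ lam : ℂ,
      Module.finrank ℂ
        (LinearMap.ker (skewKronA k' + lam • skewKronB k').mulVecLin) = 1 ∧
      ∀ w : (Fin k' ⊕ Fin (k' + 1)) → ℂ,
        (skewKronA k' + lam • skewKronB k').mulVec w = 0 →
          ∀ i : Fin k', w (Sum.inl i) = 0) ∧
    (Submodule.span ℂ
        {w : (Fin k' ⊕ Fin (k' + 1)) → ℂ |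
          ∃ lam : ℂ, (skewKronA k' + lam • skewKronB k').mulVec w = 0} :
      Set ((Fin k' ⊕ Fin (k' + 1)) → ℂ)) =
      {w : (Fin k' ⊕ Fin (k' + 1)) → ℂ | ∀ i : Fin k', w (Sum.inl i) = 0} := by
  constructor
  · intro lam
    refine ⟨?_, fun w hw => ker_inl_zero k' lam w hw⟩
    rw [ker_eq_span]
    exact finrank_span_singleton (kvec_ne_zero k' lam)
  · apply Set.Subset.antisymm
    · have hle : Submodule.span ℂ
          {w : (Fin k' ⊕ Fin (k' + 1)) → ℂ |
            ∃ lam : ℂ, (skewKronA k' + lam • skewKronB k').mulVec w = 0} ≤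
          ({ carrier := {w | ∀ i : Fin k', w (Sum.inl i) = 0},
             add_mem' := by intro a b ha hb i; simp [ha i, hb i]
             zero_mem' := by intro i; rfl
             smul_mem' := by intro c a ha i; simp [ha i] } :
            Submodule ℂ ((Fin k' ⊕ Fin (k' + 1)) → ℂ)) := by
        rw [Submodule.span_le]
        rintro w ⟨lam, hw⟩
        exact ker_inl_zero k' lam w hw
      exact hle
    · intro w hw
      simp only [Set.mem_setOf_eq] at hw
      have hrep : w = ∑ j : Fin (k'+1), w (Sum.inr j) • (Pi.single (Sum.inr j) (1:ℂ) : (Fin k' ⊕ Fin (k'+1)) → ℂ) := by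
        funext x
        rw [Finset.sum_apply]
        cases x with
        | inl i =>
          simp only [Pi.smul_apply, Pi.single_apply, smul_eq_mul]
          simp [hw i]
        | inr s =>
          simp only [Pi.smul_apply, Pi.single_apply, smul_eq_mul, Sum.inr.injEq]
          simp [Finset.sum_ite_eq]
      rw [hrep]
      exact Submodule.sum_mem _ fun j _ => Submodule.smul_mem _ _ (single_mem k' j)

end
end

section
/- Let A, B, C, D be skew-symmetric n×n complex matrices. Then the pencils (A,B) and (C,D) are strictly equivalent (there exist invertible complex n×n matrices P, Q with P·A·Q = C and P·B·Q = D) if and only if they are congruent (there exists an invertible complex n×n matrix T with Tᵀ·A·T = C and Tᵀ·B·T = D). -/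
/-!
If `P A Q = C` with `A`, `C` skew-symmetric, transposing gives `Qᵀ A Pᵀ = C` too, so
`N = Pᵀ Q⁻¹` satisfies `Nᵀ A = A N`, and likewise for `B`. Every polynomial `S = f(N)` inherits
`Sᵀ A = A S`, so if moreover `S² = N` then `(S Q)ᵀ A (S Q) = Qᵀ A N Q = C`. Such an `f` exists
for invertible `N` over `ℂ` as soon as the characteristic polynomial divides `f² - X`; this is
arranged at each nonzero root by Hensel-lifting a square root of the eigenvalue, and the roots
are glued by the Chinese remainder theorem.
-/

open Polynomial Matrix

theorem exists_pow_dvd_sq_sub_of_isCoprime {R : Type*} [CommRing R] {p g r : R}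
    (hcop : IsCoprime (2 * g) p) (hg : p ∣ g ^ 2 - r) (k : ℕ) :
    ∃ h, p ∣ h - g ∧ p ^ (k + 1) ∣ h ^ 2 - r := by
  obtain ⟨u, v, huv⟩ := hcop
  induction k with
  | zero => exact ⟨g, by simp, by simpa using hg⟩
  | succ k ih =>
    obtain ⟨h, ⟨w, hw⟩, q, hq⟩ := ih
    -- Newton step: `u` inverts `2 * g`, hence `2 * h`, modulo `p`.
    refine ⟨h - u * q * p ^ (k + 1), ⟨w - u * q * p ^ k, by linear_combination hw⟩,
      q * (v - 2 * u * w) + u ^ 2 * q ^ 2 * p ^ k, ?_⟩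
    linear_combination hq - q * p ^ (k + 1) * huv - 2 * u * q * p ^ (k + 1) * hw

theorem exists_mul_dvd_sq_sub_of_isCoprime {R : Type*} [CommRing R] {a b r : R}
    (hab : IsCoprime a b) (ha : ∃ f, a ∣ f ^ 2 - r) (hb : ∃ g, b ∣ g ^ 2 - r) :
    ∃ h, a * b ∣ h ^ 2 - r := by
  obtain ⟨f, hf⟩ := ha
  obtain ⟨g, hg⟩ := hb
  have ⟨c, d, hcd⟩ := hab
  let h := g * c * a + f * d * b
  have hhf : a ∣ h - f := ⟨(g - f) * c, by linear_combination f * hcd⟩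
  have hhg : b ∣ h - g := ⟨(f - g) * d, by linear_combination g * hcd⟩
  have sq_sub (x y : R) : x ^ 2 - r = (x - y) * (x + y) + (y ^ 2 - r) := by ring
  refine ⟨h, hab.mul_dvd ?_ ?_⟩
  · rw [sq_sub h f]; exact dvd_add (hhf.mul_right _) hf
  · rw [sq_sub h g]; exact dvd_add (hhg.mul_right _) hg

theorem Finset.exists_prod_dvd_sq_sub {R ι : Type*} [CommRing R] {r : R} (s : Finset ι)
    (d : ι → R) (hcop : (s : Set ι).Pairwise (Function.onFun IsCoprime d))
    (hd : ∀ i ∈ s, ∃ f, d i ∣ f ^ 2 - r) : ∃ f, ∏ i ∈ s, d i ∣ f ^ 2 - r := by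
  classical
  induction s using Finset.induction_on with
  | empty => exact ⟨0, by simp⟩
  | insert i s hi ih =>
    rw [Finset.prod_insert hi]
    refine exists_mul_dvd_sq_sub_of_isCoprime ?_ (hd i (mem_insert_self i s)) ?_
    · exact IsCoprime.prod_right fun j hj =>
        hcop (mem_insert_self i s) (mem_insert_of_mem hj) (ne_of_mem_of_not_mem hj hi).symm
    · exact ih (hcop.mono (by simp)) fun j hj => hd j (mem_insert_of_mem hj)

namespace Polynomial

variable {K : Type*} [Field K] [IsAlgClosed K] [NeZero (2 : K)]

theorem exists_X_sub_C_pow_dvd_sq_sub_X {l : K} (hl : l ≠ 0) (k : ℕ) :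
    ∃ f : K[X], (X - C l) ^ k ∣ f ^ 2 - X := by
  obtain ⟨s, hs⟩ := IsAlgClosed.exists_pow_nat_eq l two_pos
  have hs0 : 2 * s ≠ 0 := mul_ne_zero two_ne_zero (by rintro rfl; simp_all)
  have hcop : IsCoprime (2 * C s) (X - C l) :=
    ⟨C (2 * s)⁻¹, 0, by
      rw [zero_mul, add_zero, ← C_ofNat, ← C_mul, ← C_mul, inv_mul_cancel₀ hs0, C_1]⟩
  have hroot : X - C l ∣ C s ^ 2 - X := ⟨-1, by rw [← C_pow, hs]; ring⟩
  obtain ⟨f, -, hf⟩ := exists_pow_dvd_sq_sub_of_isCoprime hcop hroot k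
  exact ⟨f, (pow_dvd_pow _ k.le_succ).trans hf⟩

theorem exists_dvd_sq_sub_X {p : K[X]} (hp : p.coeff 0 ≠ 0) : ∃ f : K[X], p ∣ f ^ 2 - X := by
  classical
  rw [(IsAlgClosed.splits p).eq_prod_roots, Finset.prod_multiset_map_count]
  have hlc : IsUnit (C p.leadingCoeff) :=
    isUnit_C.mpr (leadingCoeff_ne_zero.mpr (by rintro rfl; simp at hp)).isUnit
  simp_rw [hlc.mul_left_dvd]
  refine Finset.exists_prod_dvd_sq_sub _ _ (fun a _ b _ hab => ?_) fun a ha => ?_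
  · exact (isCoprime_X_sub_C_of_isUnit_sub (sub_ne_zero.mpr hab).isUnit).pow
  · refine exists_X_sub_C_pow_dvd_sq_sub_X ?_ _
    rintro rfl
    exact hp (coeff_zero_eq_eval_zero p ▸ isRoot_of_mem_roots (Multiset.mem_toFinset.mp ha))

end Polynomial

theorem SemiconjBy.aeval {R A : Type*} [CommSemiring R] [Semiring A] [Algebra R A] {a x y : A}
    (h : SemiconjBy a x y) (f : R[X]) : SemiconjBy a (aeval x f) (aeval y f) := by
  induction f using Polynomial.induction_on' with
  | add p q hp hq => simpa only [map_add] using hp.add_right hq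
  | monomial k c =>
    simpa only [aeval_monomial] using
      SemiconjBy.mul_right (Algebra.commute_algebraMap_right c a) (h.pow_right k)

namespace Matrix

theorem transpose_mul_mul_transpose_eq_of_skew {m n R : Type*} [Fintype n] [CommRing R]
    {P : Matrix m n R} {A : Matrix n n R} {Q : Matrix n m R} {C : Matrix m m R}
    (hA : Aᵀ = -A) (hC : Cᵀ = -C) (h : P * A * Q = C) : Qᵀ * A * Pᵀ = C := by
  simpa [transpose_mul, hA, hC, Matrix.mul_assoc] using congrArg (fun M => -Mᵀ) h

variable {n R : Type*} [Fintype n] [DecidableEq n] [CommRing R]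

theorem transpose_aeval (N : Matrix n n R) (f : R[X]) : (aeval N f)ᵀ = aeval Nᵀ f := by
  induction f using Polynomial.induction_on' with
  | add p q hp hq => simp [hp, hq]
  | monomial k c =>
    rw [aeval_monomial, aeval_monomial, transpose_mul, transpose_pow, algebraMap_eq_diagonal,
      diagonal_transpose, ← algebraMap_eq_diagonal, Algebra.commutes]

theorem semiconjBy_transpose_mul_inv {P A Q : Matrix n n R} (hQ : IsUnit Q.det)
    (h : P * A * Q = Qᵀ * A * Pᵀ) : SemiconjBy A (Pᵀ * Q⁻¹) (Pᵀ * Q⁻¹)ᵀ := by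
  have hQ' : (Q⁻¹)ᵀ * Qᵀ = 1 := by rw [← transpose_mul, mul_nonsing_inv Q hQ, transpose_one]
  refine Eq.symm ?_
  calc (Pᵀ * Q⁻¹)ᵀ * A = (Q⁻¹)ᵀ * (P * A * Q) * Q⁻¹ := by
        simp only [transpose_mul, transpose_transpose, Matrix.mul_assoc, mul_nonsing_inv Q hQ,
          Matrix.mul_one]
    _ = A * (Pᵀ * Q⁻¹) := by
        rw [h]; simp only [← Matrix.mul_assoc, hQ', Matrix.one_mul]

theorem transpose_aeval_mul_eq_of_skew {P A Q C : Matrix n n R} (hA : Aᵀ = -A) (hC : Cᵀ = -C)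
    (hQ : IsUnit Q.det) (h : P * A * Q = C) {f : R[X]}
    (hf : aeval (Pᵀ * Q⁻¹) f ^ 2 = Pᵀ * Q⁻¹) :
    (aeval (Pᵀ * Q⁻¹) f * Q)ᵀ * A * (aeval (Pᵀ * Q⁻¹) f * Q) = C := by
  have h' := transpose_mul_mul_transpose_eq_of_skew hA hC h
  have hS : (aeval (Pᵀ * Q⁻¹) f)ᵀ * A = A * aeval (Pᵀ * Q⁻¹) f := by
    rw [transpose_aeval]
    exact ((semiconjBy_transpose_mul_inv hQ (h.trans h'.symm)).aeval f).eq.symm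
  calc (aeval (Pᵀ * Q⁻¹) f * Q)ᵀ * A * (aeval (Pᵀ * Q⁻¹) f * Q)
        = Qᵀ * ((aeval (Pᵀ * Q⁻¹) f)ᵀ * A) * aeval (Pᵀ * Q⁻¹) f * Q := by
          simp only [transpose_mul, Matrix.mul_assoc]
    _ = Qᵀ * A * Pᵀ * (Q⁻¹ * Q) := by
          rw [hS]
          simp only [Matrix.mul_assoc]
          rw [← Matrix.mul_assoc (aeval _ f), ← sq, hf, Matrix.mul_assoc]
    _ = C := by rw [nonsing_inv_mul Q hQ, Matrix.mul_one, h']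

theorem exists_aeval_sq_eq {K : Type*} [Field K] [IsAlgClosed K] [NeZero (2 : K)]
    {N : Matrix n n K} (hN : IsUnit N.det) : ∃ f : K[X], aeval N f ^ 2 = N := by
  have hN0 : N.charpoly.coeff 0 ≠ 0 := by
    intro h0
    simpa [det_eq_sign_charpoly_coeff N, h0] using hN.ne_zero
  obtain ⟨f, q, hq⟩ := exists_dvd_sq_sub_X hN0
  refine ⟨f, sub_eq_zero.mp ?_⟩
  simpa [aeval_self_charpoly] using congrArg (aeval N) hq

end Matrix

/-- A classical result: two pencils of skew-symmetric matrices are strictly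
equivalent if and only if they are congruent. -/
theorem skew_pencil_strictEquiv_iff_congruent (n : ℕ)
    (A B C D : Matrix (Fin n) (Fin n) ℂ)
    (hA : Aᵀ = -A) (hB : Bᵀ = -B) (hC : Cᵀ = -C) (hD : Dᵀ = -D) :
    (∃ P Q : Matrix (Fin n) (Fin n) ℂ,
        IsUnit P.det ∧ IsUnit Q.det ∧ P * A * Q = C ∧ P * B * Q = D) ↔
    (∃ T : Matrix (Fin n) (Fin n) ℂ,
        IsUnit T.det ∧ Tᵀ * A * T = C ∧ Tᵀ * B * T = D) := by
  constructor
  · rintro ⟨P, Q, hP, hQ, hAC, hBD⟩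
    have hN : IsUnit (Pᵀ * Q⁻¹).det := by
      rw [det_mul, det_transpose]; exact hP.mul (isUnit_nonsing_inv_det Q hQ)
    obtain ⟨f, hf⟩ := exists_aeval_sq_eq hN
    have hS : IsUnit (aeval (Pᵀ * Q⁻¹) f).det := by
      rw [← hf, det_pow] at hN; exact isUnit_pow_iff two_ne_zero |>.mp hN
    exact ⟨aeval (Pᵀ * Q⁻¹) f * Q, by rw [det_mul]; exact hS.mul hQ,
      transpose_aeval_mul_eq_of_skew hA hC hQ hAC hf,
      transpose_aeval_mul_eq_of_skew hB hD hQ hBD hf⟩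
  · rintro ⟨T, hT, hAC, hBD⟩
    exact ⟨Tᵀ, T, by rwa [det_transpose], hT, hAC, hBD⟩
end
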